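/- arXiv:2305.18861 — 2 statements merged into one kernel-verified Lean document; each statement's English description precedes it below -/
import Mathlib

section
/- Let P, G ∈ ℝ_{>0}^{m×n} be fixed matrices and consider the iterates of the iterative weight-update algorithm. There exists a constant c > 0, depending only on P and G, such that for every iteration r ≥ 0 and every ε ∈ (0,1]: if ℓ_max^{(r)} ≥ (1+ε)·ℓ_min^{(r)}, then ℓ_min^{(r+1)} ≥ (1 + c·ε)·ℓ_min^{(r)}. -/
open Finset

/-- GP-allocation: fraction of item `j` assigned to agent `i`. -/
noncomputable def gpAlloc {m n : ℕ} (G : Fin m → Fin n → ℝ) (w : Fin m → ℝ)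
    (i : Fin m) (j : Fin n) : ℝ :=
  G i j * w i / ∑ i', G i' j * w i'

/-- Load of agent `i` under the GP-allocation. -/
noncomputable def gpLoad {m n : ℕ} (P G : Fin m → Fin n → ℝ) (w : Fin m → ℝ)
    (i : Fin m) : ℝ :=
  ∑ j, gpAlloc G w i j * P i j

noncomputable def gpS {m n : ℕ} (P G : Fin m → Fin n → ℝ) (u : Fin m → ℝ) (i : Fin m) : ℝ :=
  ∑ j, G i j * P i j / (∑ i', G i' j * u i')

lemma gpLoad_eq {m n : ℕ} (P G : Fin m → Fin n → ℝ) (u : Fin m → ℝ) (i : Fin m) :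
    gpLoad P G u i = u i * gpS P G u i := by
  unfold gpLoad gpAlloc gpS
  rw [Finset.mul_sum]
  exact Finset.sum_congr rfl fun j _ => by ring

lemma denom_pos {m n : ℕ} (hm : 0 < m) (G : Fin m → Fin n → ℝ) (hG : ∀ i j, 0 < G i j)
    (u : Fin m → ℝ) (hu : ∀ i, 0 < u i) (j : Fin n) : 0 < ∑ i', G i' j * u i' :=
  Finset.sum_pos (fun i _ => mul_pos (hG i j) (hu i)) ⟨⟨0, hm⟩, mem_univ _⟩

lemma gpS_pos {m n : ℕ} (hm : 0 < m) (hn : 0 < n) (P G : Fin m → Fin n → ℝ)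
    (hP : ∀ i j, 0 < P i j) (hG : ∀ i j, 0 < G i j)
    (u : Fin m → ℝ) (hu : ∀ i, 0 < u i) (i : Fin m) : 0 < gpS P G u i :=
  Finset.sum_pos (fun j _ => div_pos (mul_pos (hG i j) (hP i j)) (denom_pos hm G hG u hu j))
    ⟨⟨0, hn⟩, mem_univ _⟩

lemma gpLoad_pos {m n : ℕ} (hm : 0 < m) (hn : 0 < n) (P G : Fin m → Fin n → ℝ)
    (hP : ∀ i j, 0 < P i j) (hG : ∀ i j, 0 < G i j)
    (u : Fin m → ℝ) (hu : ∀ i, 0 < u i) (i : Fin m) : 0 < gpLoad P G u i := by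
  rw [gpLoad_eq]; exact mul_pos (hu i) (gpS_pos hm hn P G hP hG u hu i)

lemma gpS_core {m n : ℕ} (hm : 0 < m) (P G : Fin m → Fin n → ℝ)
    (hP : ∀ i j, 0 < P i j) (hG : ∀ i j, 0 < G i j)
    (v : Fin m → ℝ) (w : Fin m → ℝ) (hv : ∀ i, 0 < v i)
    (t : ℝ)
    (hd : ∀ j, (∑ i', G i' j * v i') ≤ (∑ i', G i' j * w i') / t) (i : Fin m) :
    t * gpS P G w i ≤ gpS P G v i := by
  unfold gpS
  rw [Finset.mul_sum]
  refine Finset.sum_le_sum fun j _ => ?_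
  have hA : 0 ≤ G i j * P i j := le_of_lt (mul_pos (hG i j) (hP i j))
  have hDv : 0 < ∑ i', G i' j * v i' := denom_pos hm G hG v hv j
  calc t * (G i j * P i j / (∑ i', G i' j * w i'))
      = G i j * P i j / ((∑ i', G i' j * w i') / t) := by
        rw [div_div_eq_mul_div]; ring
    _ ≤ G i j * P i j / (∑ i', G i' j * v i') :=
        div_le_div_of_nonneg_left hA hDv (hd j)

lemma heq_aux (wi l1 li S L u : ℝ) (hwi : wi ≠ 0) (hl1 : l1 ≠ 0) (hS : S ≠ 0) (hu : u ≠ 0)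
    (hli : li = wi * S) : (wi * l1 / li) * (L / (l1 * u) * S) = L / u := by
  subst hli; field_simp

lemma arith1 (D A l1 L ε δ' : ℝ) (hL : 0 < L) (hl1 : 0 < l1) (hε0 : 0 < ε)
    (hAD : δ' * D ≤ A) :
    (D - A) * l1 / L + A * l1 / ((1 + ε) * L) ≤ D * l1 * (1 - δ' * ε / (1 + ε)) / L := by
  have h1ε : (0:ℝ) < 1 + ε := by linarith
  have key : (D - A) * (1 + ε) + A ≤ D * (1 + ε) * (1 - δ' * ε / (1 + ε)) := by
    have h3 : D * (1 + ε) * (1 - δ' * ε / (1 + ε)) = D * (1 + ε) - D * δ' * ε := by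
      field_simp
    rw [h3]
    nlinarith [mul_le_mul_of_nonneg_right hAD hε0.le]
  have hpos : (0:ℝ) < l1 / ((1 + ε) * L) := div_pos hl1 (mul_pos h1ε hL)
  have h2 := mul_le_mul_of_nonneg_right key hpos.le
  calc (D - A) * l1 / L + A * l1 / ((1 + ε) * L)
      = ((D - A) * (1 + ε) + A) * (l1 / ((1 + ε) * L)) := by
        field_simp
    _ ≤ (D * (1 + ε) * (1 - δ' * ε / (1 + ε))) * (l1 / ((1 + ε) * L)) := h2
    _ = D * l1 * (1 - δ' * ε / (1 + ε)) / L := by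
        field_simp

lemma arith2 (L ε δ' : ℝ) (hL : 0 < L) (hε0 : 0 < ε) (hε1 : ε ≤ 1)
    (hδ'pos : 0 < δ') (hδ'half : δ' ≤ 1/2) :
    (1 + δ' / 2 * ε) * L * (1 - δ' * ε / (1 + ε)) ≤ L := by
  have h1ε : (0:ℝ) < 1 + ε := by linarith
  have hy : δ' * ε / 2 ≤ δ' * ε / (1 + ε) :=
    div_le_div_of_nonneg_left (by positivity) h1ε (by linarith)
  have hy2 : δ' * ε / (1 + ε) ≤ 1 := by
    rw [div_le_one h1ε]; nlinarith
  nlinarith [mul_pos hδ'pos hε0, mul_nonneg (mul_nonneg hδ'pos.le hε0.le) hL.le]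

theorem stmt5 {m n : ℕ} (hm : 0 < m) (P G : Fin m → Fin n → ℝ)
    (hP : ∀ i j, 0 < P i j) (hG : ∀ i j, 0 < G i j)
    (W : ℕ → Fin m → ℝ)
    (hW0 : ∀ i, W 0 i = 1)
    (hWrec : ∀ r i, W (r + 1) i =
      W r i * gpLoad P G (W r) ⟨0, hm⟩ / gpLoad P G (W r) i) :
    ∃ c : ℝ, 0 < c ∧ ∀ (r : ℕ) (ε : ℝ), 0 < ε → ε ≤ 1 →
      (1 + ε) * (⨅ i, gpLoad P G (W r) i) ≤ (⨆ i, gpLoad P G (W r) i) →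
      (1 + c * ε) * (⨅ i, gpLoad P G (W r) i) ≤ ⨅ i, gpLoad P G (W (r + 1)) i := by
  haveI : Nonempty (Fin m) := ⟨⟨0, hm⟩⟩
  rcases Nat.eq_zero_or_pos n with hn | hn
  · subst hn
    refine ⟨1, one_pos, fun r ε hε0 hε1 h => ?_⟩
    have hz : ∀ r', (⨅ i, gpLoad P G (W r') i) = 0 := fun r' => by
      simp [gpLoad, ciInf_const]
    rw [hz, hz]
    simp
  haveI : Nonempty (Fin n) := ⟨⟨0, hn⟩⟩
  -- positivity of weights and loads
  have hWpos : ∀ r i, 0 < W r i := by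
    intro r
    induction r with
    | zero => intro i; rw [hW0]; norm_num
    | succ r ih =>
      intro i
      rw [hWrec]
      exact div_pos (mul_pos (ih i) (gpLoad_pos hm hn P G hP hG _ ih _))
        (gpLoad_pos hm hn P G hP hG _ ih i)
  have hLpos : ∀ r i, 0 < gpLoad P G (W r) i := fun r i =>
    gpLoad_pos hm hn P G hP hG _ (hWpos r) i
  have hbdd : ∀ r, BddBelow (Set.range (gpLoad P G (W r))) := fun r =>
    (Set.finite_range _).bddBelow
  have hinf_le : ∀ r i, (⨅ i, gpLoad P G (W r) i) ≤ gpLoad P G (W r) i := fun r i =>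
    ciInf_le (hbdd r) i
  have hinfpos : ∀ r, 0 < ⨅ i, gpLoad P G (W r) i := by
    intro r
    obtain ⟨i0, h0⟩ := Finite.exists_min (gpLoad P G (W r))
    exact lt_of_lt_of_le (hLpos r i0) (le_ciInf h0)
  -- generic step estimate
  have step : ∀ (r : ℕ) (u : ℝ), 0 < u →
      (∀ j, (∑ i', G i' j * W (r+1) i') ≤
        (∑ i', G i' j * W r i') * gpLoad P G (W r) ⟨0, hm⟩ * u / (⨅ i, gpLoad P G (W r) i)) →
      ∀ i, (⨅ i, gpLoad P G (W r) i) / u ≤ gpLoad P G (W (r+1)) i := by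
    intro r u hu hd i
    set L := ⨅ i, gpLoad P G (W r) i with hLdef
    set l1 := gpLoad P G (W r) ⟨0, hm⟩ with hl1def
    have hl1 : 0 < l1 := hLpos r _
    have hL : 0 < L := hinfpos r
    have hd' : ∀ j, (∑ i', G i' j * W (r+1) i') ≤ (∑ i', G i' j * W r i') / (L / (l1 * u)) := by
      intro j
      rw [div_div_eq_mul_div, ← mul_assoc]
      exact hd j
    have hcore := gpS_core hm P G hP hG (W (r+1)) (W r) (hWpos (r+1)) (L / (l1 * u)) hd' i
    have h2 : W (r+1) i * (L / (l1 * u) * gpS P G (W r) i) ≤ gpLoad P G (W (r+1)) i := by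
      rw [gpLoad_eq]
      exact mul_le_mul_of_nonneg_left hcore (le_of_lt (hWpos (r+1) i))
    have hSw : 0 < gpS P G (W r) i := gpS_pos hm hn P G hP hG _ (hWpos r) i
    have heq : W (r+1) i * (L / (l1 * u) * gpS P G (W r) i) = L / u := by
      rw [hWrec r i]
      exact heq_aux (W r i) l1 (gpLoad P G (W r) i) (gpS P G (W r) i) L u
        (hWpos r i).ne' hl1.ne' hSw.ne' hu.ne' (gpLoad_eq P G (W r) i)
    rw [heq] at h2
    exact h2
  -- monotonicity of the min load
  have hmono : ∀ r, (⨅ i, gpLoad P G (W r) i) ≤ ⨅ i, gpLoad P G (W (r+1)) i := by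
    intro r
    have hd : ∀ j, (∑ i', G i' j * W (r+1) i') ≤
        (∑ i', G i' j * W r i') * gpLoad P G (W r) ⟨0, hm⟩ * 1 / (⨅ i, gpLoad P G (W r) i) := by
      intro j
      have h1 : ∀ i' : Fin m, G i' j * W (r+1) i' ≤
          G i' j * (W r i' * gpLoad P G (W r) ⟨0, hm⟩ / (⨅ i, gpLoad P G (W r) i)) := by
        intro i'
        rw [hWrec r i']
        exact mul_le_mul_of_nonneg_left
          (div_le_div_of_nonneg_left (le_of_lt (mul_pos (hWpos r i') (hLpos r _)))
            (hinfpos r) (hinf_le r i'))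
          (le_of_lt (hG i' j))
      calc (∑ i', G i' j * W (r+1) i')
          ≤ ∑ i', G i' j * (W r i' * gpLoad P G (W r) ⟨0, hm⟩ / (⨅ i, gpLoad P G (W r) i)) :=
            Finset.sum_le_sum fun i' _ => h1 i'
        _ = (∑ i', G i' j * W r i') * gpLoad P G (W r) ⟨0, hm⟩ * 1 / (⨅ i, gpLoad P G (W r) i) := by
            rw [mul_one, Finset.sum_mul, Finset.sum_div]
            exact Finset.sum_congr rfl fun i' _ => by ring
    have h := step r 1 one_pos hd
    exact le_ciInf fun i => by simpa using h i
  have hL0le : ∀ r, (⨅ i, gpLoad P G (W 0) i) ≤ ⨅ i, gpLoad P G (W r) i := by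
    intro r
    induction r with
    | zero => exact le_refl _
    | succ r ih => exact ih.trans (hmono r)
  -- extremal constants
  obtain ⟨qa, hqa⟩ := Finite.exists_min (fun q : Fin m × Fin n => G q.1 q.2)
  obtain ⟨qb, hqb⟩ := Finite.exists_max (fun q : Fin m × Fin n => G q.1 q.2)
  obtain ⟨qp, hqp⟩ := Finite.exists_max (fun q : Fin m × Fin n => P q.1 q.2)
  set a := G qa.1 qa.2 with hadef
  set b := G qb.1 qb.2 with hbdef
  set pm := P qp.1 qp.2 with hpmdef
  have hapos : 0 < a := hG _ _
  have hbpos : 0 < b := hG _ _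
  have hpmpos : 0 < pm := hP _ _
  have hale : ∀ i j, a ≤ G i j := fun i j => hqa (i, j)
  have hble : ∀ i j, G i j ≤ b := fun i j => hqb (i, j)
  have hple : ∀ i j, P i j ≤ pm := fun i j => hqp (i, j)
  set L0 := ⨅ i, gpLoad P G (W 0) i with hL0def
  have hL0pos : 0 < L0 := hinfpos 0
  have hnR : (0:ℝ) < n := Nat.cast_pos.mpr hn
  have hmR : (0:ℝ) < m := Nat.cast_pos.mpr hm
  set C := (n : ℝ) * (b * pm) / a with hCdef
  have hCpos : 0 < C := by positivity
  -- weight-ratio bound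
  have hratio : ∀ r (i i' : Fin m), L0 * W r i ≤ C * W r i' := by
    intro r i i'
    have hD : ∀ j, a * W r i ≤ ∑ i'', G i'' j * W r i'' := by
      intro j
      calc a * W r i ≤ G i j * W r i :=
            mul_le_mul_of_nonneg_right (hale i j) (le_of_lt (hWpos r i))
        _ ≤ ∑ i'', G i'' j * W r i'' :=
            Finset.single_le_sum (fun i'' _ => le_of_lt (mul_pos (hG i'' j) (hWpos r i''))) (mem_univ i)
    have h1 : gpLoad P G (W r) i' ≤ C * W r i' / W r i := by
      unfold gpLoad gpAlloc
      calc (∑ j, G i' j * W r i' / (∑ i'', G i'' j * W r i'') * P i' j)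
          ≤ ∑ j : Fin n, b * W r i' / (a * W r i) * pm := by
            refine Finset.sum_le_sum fun j _ => ?_
            refine mul_le_mul ?_ (hple i' j) (le_of_lt (hP i' j))
              (div_nonneg (le_of_lt (mul_pos hbpos (hWpos r i')))
                (le_of_lt (mul_pos hapos (hWpos r i))))
            exact div_le_div₀ (le_of_lt (mul_pos hbpos (hWpos r i')))
              (mul_le_mul_of_nonneg_right (hble i' j) (le_of_lt (hWpos r i')))
              (mul_pos hapos (hWpos r i)) (hD j)
        _ = (n : ℝ) * (b * W r i' / (a * W r i) * pm) := by
            rw [Finset.sum_const, card_univ, Fintype.card_fin, nsmul_eq_mul]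
        _ = C * W r i' / W r i := by
            rw [hCdef]
            have h1 : a ≠ 0 := hapos.ne'
            have h2 : W r i ≠ 0 := (hWpos r i).ne'
            field_simp
    have h2 : L0 ≤ C * W r i' / W r i := ((hL0le r).trans (hinf_le r i')).trans h1
    exact (le_div_iff₀ (hWpos r i)).mp h2
  set δ := a * L0 / (C * b * m) with hδdef
  have hδpos : 0 < δ := by positivity
  have hδle : ∀ r (j : Fin n) (k : Fin m), δ * (∑ i', G i' j * W r i') ≤ G k j * W r k := by
    intro r j k
    have h1 : (∑ i', G i' j * W r i') ≤ (m : ℝ) * (b * (C * W r k / L0)) := by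
      calc (∑ i', G i' j * W r i') ≤ ∑ i' : Fin m, b * (C * W r k / L0) := by
            refine Finset.sum_le_sum fun i' _ => ?_
            have hwle : W r i' ≤ C * W r k / L0 := by
              rw [le_div_iff₀ hL0pos]; linarith [hratio r i' k]
            calc G i' j * W r i' ≤ b * W r i' :=
                  mul_le_mul_of_nonneg_right (hble i' j) (le_of_lt (hWpos r i'))
              _ ≤ b * (C * W r k / L0) := mul_le_mul_of_nonneg_left hwle (le_of_lt hbpos)
        _ = (m : ℝ) * (b * (C * W r k / L0)) := by
            rw [Finset.sum_const, card_univ, Fintype.card_fin, nsmul_eq_mul]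
    have h2 : δ * ((m : ℝ) * (b * (C * W r k / L0))) = a * W r k := by
      rw [hδdef]
      have h3 : C ≠ 0 := hCpos.ne'
      have h4 : L0 ≠ 0 := hL0pos.ne'
      have h5 : b ≠ 0 := hbpos.ne'
      have h6 : (m : ℝ) ≠ 0 := hmR.ne'
      field_simp
    calc δ * (∑ i', G i' j * W r i') ≤ δ * ((m : ℝ) * (b * (C * W r k / L0))) :=
          mul_le_mul_of_nonneg_left h1 (le_of_lt hδpos)
      _ = a * W r k := h2
      _ ≤ G k j * W r k := mul_le_mul_of_nonneg_right (hale k j) (le_of_lt (hWpos r k))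
  set δ' := min δ (1/2 : ℝ) with hδ'def
  have hδ'pos : 0 < δ' := lt_min hδpos (by norm_num)
  have hδ'half : δ' ≤ 1/2 := min_le_right _ _
  refine ⟨δ' / 2, by positivity, ?_⟩
  intro r ε hε0 hε1 hsup
  obtain ⟨k, hk⟩ := Finite.exists_max (gpLoad P G (W r))
  have hkge : (1 + ε) * (⨅ i, gpLoad P G (W r) i) ≤ gpLoad P G (W r) k :=
    hsup.trans (ciSup_le hk)
  set L := ⨅ i, gpLoad P G (W r) i with hLdef
  set l1 := gpLoad P G (W r) ⟨0, hm⟩ with hl1def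
  have hl1 : 0 < l1 := hLpos r _
  have hL : 0 < L := hinfpos r
  have h1ε : (0:ℝ) < 1 + ε := by linarith
  set u := 1 - δ' * ε / (1 + ε) with hudef
  have hy2 : δ' * ε / (1 + ε) ≤ 1/2 := by
    rw [div_le_iff₀ h1ε]
    nlinarith
  have hupos : 0 < u := by rw [hudef]; linarith
  have hd : ∀ j, (∑ i', G i' j * W (r+1) i') ≤ (∑ i', G i' j * W r i') * l1 * u / L := by
    intro j
    set D := ∑ i', G i' j * W r i' with hDdef
    set A := G k j * W r k with hAdef
    have hDpos : 0 < D := denom_pos hm G hG _ (hWpos r) j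
    have hAD : δ' * D ≤ A := by
      calc δ' * D ≤ δ * D := mul_le_mul_of_nonneg_right (min_le_left _ _) (le_of_lt hDpos)
        _ ≤ A := hδle r j k
    have hApos : 0 < A := mul_pos (hG k j) (hWpos r k)
    have hterm : ∀ i' : Fin m, G i' j * W (r+1) i' ≤ G i' j * (W r i' * l1 / L) := by
      intro i'
      rw [hWrec r i']
      exact mul_le_mul_of_nonneg_left
        (div_le_div_of_nonneg_left (le_of_lt (mul_pos (hWpos r i') hl1)) hL (hinf_le r i'))
        (le_of_lt (hG i' j))
    have htermk : G k j * W (r+1) k ≤ A * l1 / ((1 + ε) * L) := by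
      rw [hWrec r k]
      have h5 : G k j * (W r k * l1 / gpLoad P G (W r) k) =
          A * l1 / gpLoad P G (W r) k := by rw [hAdef]; ring
      rw [h5]
      exact div_le_div_of_nonneg_left (le_of_lt (mul_pos hApos hl1)) (mul_pos h1ε hL) hkge
    have hDA : D - A = ∑ i' ∈ univ.erase k, G i' j * W r i' := by
      rw [hDdef, hAdef, sub_eq_iff_eq_add]
      exact (Finset.sum_erase_add univ _ (mem_univ k)).symm
    have hsplit : (∑ i', G i' j * W (r+1) i') =
        (∑ i' ∈ univ.erase k, G i' j * W (r+1) i') + G k j * W (r+1) k :=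
      (Finset.sum_erase_add univ _ (mem_univ k)).symm
    have herase : (∑ i' ∈ univ.erase k, G i' j * W (r+1) i') ≤ (D - A) * l1 / L := by
      calc (∑ i' ∈ univ.erase k, G i' j * W (r+1) i')
          ≤ ∑ i' ∈ univ.erase k, G i' j * (W r i' * l1 / L) :=
            Finset.sum_le_sum fun i' _ => hterm i'
        _ = (∑ i' ∈ univ.erase k, G i' j * W r i') * l1 / L := by
            rw [Finset.sum_mul, Finset.sum_div]
            exact Finset.sum_congr rfl fun i' _ => by ring
        _ = (D - A) * l1 / L := by rw [hDA]
    rw [hsplit]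
    calc (∑ i' ∈ univ.erase k, G i' j * W (r+1) i') + G k j * W (r+1) k
        ≤ (D - A) * l1 / L + A * l1 / ((1 + ε) * L) := add_le_add herase htermk
      _ ≤ D * l1 * u / L := by
          rw [hudef]
          exact arith1 D A l1 L ε δ' hL hl1 hε0 hAD
  have hstep := step r u hupos hd
  refine le_ciInf fun i => le_trans ?_ (hstep i)
  rw [le_div_iff₀ hupos, hudef]
  exact arith2 L ε δ' hL hε0 hε1 hδ'pos hδ'half
end

section
/- Fix a weight matrix P ∈ ℝ_{>0}^{m×n}. Suppose L : ℝ → ℝ_{>0} is a function such that for every α ∈ ℝ there exists w_α ∈ ℝ_{>0}^m with ℓ_i(P,α,w_α) = L(α) for every i ∈ [m]. Then lim_{α→−∞} L(α) = ℓ^MKS(P). -/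
open Finset

/-- EP-allocation with exponent `α`: fraction of item `j` assigned to agent `i`. -/
noncomputable def epAlloc {m n : ℕ} (P : Fin m → Fin n → ℝ) (α : ℝ) (w : Fin m → ℝ)
    (i : Fin m) (j : Fin n) : ℝ :=
  P i j ^ α * w i / ∑ i', P i' j ^ α * w i'

/-- Load of agent `i` under the EP-allocation with exponent `α`. -/
noncomputable def epLoad {m n : ℕ} (P : Fin m → Fin n → ℝ) (α : ℝ) (w : Fin m → ℝ)
    (i : Fin m) : ℝ :=
  ∑ j, epAlloc P α w i j * P i j

/-- A feasible (fractional) assignment: entries in `[0,1]`, each item fully allocated. -/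
def Feasible {m n : ℕ} (X : Fin m → Fin n → ℝ) : Prop :=
  (∀ i j, 0 ≤ X i j ∧ X i j ≤ 1) ∧ ∀ j, ∑ i, X i j = 1

/-- Load of agent `i` under the assignment `X`. -/
noncomputable def loadX {m n : ℕ} (P X : Fin m → Fin n → ℝ) (i : Fin m) : ℝ :=
  ∑ j, X i j * P i j

/-- Optimal makespan (MinMax objective). -/
noncomputable def MKS {m n : ℕ} (P : Fin m → Fin n → ℝ) : ℝ :=
  sInf { t | ∃ X, Feasible X ∧ t = ⨆ i, loadX P X i }

/-- Optimal Santa Claus value (MaxMin objective). -/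
noncomputable def SNT {m n : ℕ} (P : Fin m → Fin n → ℝ) : ℝ :=
  sSup { t | ∃ X, Feasible X ∧ t = ⨅ i, loadX P X i }

open Real in
/-- Per-item key inequality. -/
lemma key_ineq {m : ℕ} (a : Fin m → ℝ) (ha : ∀ i, 0 < a i) {α ε : ℝ}
    (hα : α ≤ -1) (hε : 0 < ε) (i0 : Fin m) (hi0 : ∀ i, a i0 ≤ a i) :
    ∑ i, a i ^ α * a i ≤ ((1+ε) * (1 + m * (1+ε)^α)) * (a i0 * ∑ i, a i ^ α) := by
  set S := ∑ i, a i ^ α with hS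
  have hSpos : 0 < S := Finset.sum_pos (fun i _ => Real.rpow_pos_of_pos (ha i) α)
    ⟨i0, Finset.mem_univ i0⟩
  have h1ε : (0:ℝ) < 1 + ε := by linarith
  have hp : 0 < (1+ε)^α := Real.rpow_pos_of_pos h1ε α
  have hterm : ∀ i : Fin m, a i ^ α * a i ≤
      (1+ε) * a i0 * a i ^ α + (1+ε)^α * ((1+ε) * (a i0 * S)) := by
    intro i
    have hSle : a i0 ^ α ≤ S := by
      refine Finset.single_le_sum (f := fun i => a i ^ α) ?_ (Finset.mem_univ i0)
      exact fun i _ => (Real.rpow_pos_of_pos (ha i) α).le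
    have hai : 0 < a i ^ α := Real.rpow_pos_of_pos (ha i) α
    rcases le_or_gt (a i) ((1+ε) * a i0) with h | h
    · have h1 : a i ^ α * a i ≤ a i ^ α * ((1+ε) * a i0) :=
        mul_le_mul_of_nonneg_left h hai.le
      have h2 : 0 ≤ (1+ε)^α * ((1+ε) * (a i0 * S)) :=
        (mul_pos hp (mul_pos h1ε (mul_pos (ha i0) hSpos))).le
      nlinarith
    · have e1 : a i ^ α * a i = a i ^ (α + 1) := (Real.rpow_add_one (ha i).ne' α).symm
      have e2 : a i ^ (α+1) ≤ ((1+ε) * a i0) ^ (α+1) :=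
        Real.rpow_le_rpow_of_nonpos (mul_pos h1ε (ha i0)) h.le (by linarith)
      have e3 : ((1+ε) * a i0) ^ (α+1) = (1+ε)^(α+1) * (a i0)^(α+1) :=
        Real.mul_rpow h1ε.le (ha i0).le
      have e4 : (a i0)^(α+1) = a i0 ^ α * a i0 := Real.rpow_add_one (ha i0).ne' α
      have e5 : (1+ε)^(α+1) = (1+ε)^α * (1+ε) := Real.rpow_add_one h1ε.ne' α
      have e6 : (1+ε)^(α+1) * (a i0)^(α+1) ≤ (1+ε)^α * ((1+ε) * (a i0 * S)) := by
        rw [e4, e5]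
        have h7 : a i0 ^ α * a i0 ≤ S * a i0 :=
          mul_le_mul_of_nonneg_right hSle (ha i0).le
        have h8 := mul_le_mul_of_nonneg_left h7 (mul_pos hp h1ε).le
        calc (1+ε)^α * (1+ε) * (a i0 ^ α * a i0)
            = ((1+ε)^α * (1+ε)) * (a i0 ^ α * a i0) := by ring
          _ ≤ ((1+ε)^α * (1+ε)) * (S * a i0) := h8
          _ = (1+ε)^α * ((1+ε) * (a i0 * S)) := by ring
      have h2 : 0 ≤ (1+ε) * a i0 * a i ^ α :=
        (mul_pos (mul_pos h1ε (ha i0)) hai).le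
      calc a i ^ α * a i = a i ^ (α+1) := e1
        _ ≤ (1+ε)^(α+1) * (a i0)^(α+1) := by rw [← e3]; exact e2
        _ ≤ (1+ε)^α * ((1+ε) * (a i0 * S)) := e6
        _ ≤ (1+ε) * a i0 * a i ^ α + (1+ε)^α * ((1+ε) * (a i0 * S)) := by linarith
  calc ∑ i, a i ^ α * a i
      ≤ ∑ i, ((1+ε) * a i0 * a i ^ α + (1+ε)^α * ((1+ε) * (a i0 * S))) :=
        Finset.sum_le_sum (fun i _ => hterm i)
    _ = (1+ε) * a i0 * S + m * ((1+ε)^α * ((1+ε) * (a i0 * S))) := by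
        rw [Finset.sum_add_distrib, ← Finset.mul_sum, Finset.sum_const]
        simp [hS]
    _ = ((1+ε) * (1 + m * (1+ε)^α)) * (a i0 * S) := by ring


theorem stmt13 {m n : ℕ} (hm : 0 < m) (P : Fin m → Fin n → ℝ)
    (hP : ∀ i j, 0 < P i j)
    (L : ℝ → ℝ) (hLpos : ∀ α, 0 < L α)
    (hcanon : ∀ α : ℝ, ∃ w : Fin m → ℝ, (∀ i, 0 < w i) ∧
      ∀ i, epLoad P α w i = L α) :
    Filter.Tendsto L Filter.atBot (nhds (MKS P)) := by
  haveI : NeZero m := ⟨hm.ne'⟩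
  haveI : Nonempty (Fin m) := ⟨⟨0, hm⟩⟩
  set S : Set ℝ := { t | ∃ X, Feasible X ∧ t = ⨆ i, loadX P X i } with hSdef
  have hSne : S.Nonempty := by
    refine ⟨⨆ i, loadX P (fun _ _ => (m:ℝ)⁻¹) i, fun _ _ => (m:ℝ)⁻¹, ⟨?_, ?_⟩, rfl⟩
    · intro i j
      constructor
      · positivity
      · rw [inv_le_one_iff₀]; right; exact_mod_cast hm
    · intro j
      simp [Finset.sum_const, Finset.card_univ]
  have hSnonneg : ∀ t ∈ S, 0 ≤ t := by
    rintro t ⟨X, hX, rfl⟩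
    have h0 : 0 ≤ loadX P X ⟨0, hm⟩ :=
      Finset.sum_nonneg fun j _ => mul_nonneg (hX.1 _ j).1 (hP _ j).le
    exact h0.trans (le_ciSup (Set.Finite.bddAbove (Set.finite_range _)) _)
  have hSbdd : BddBelow S := ⟨0, hSnonneg⟩
  have hlow : ∀ α : ℝ, MKS P ≤ L α := by
    intro α
    obtain ⟨w, hw, hload⟩ := hcanon α
    have hD : ∀ j, 0 < ∑ i', P i' j ^ α * w i' :=
      fun j => Finset.sum_pos (fun i _ => mul_pos (Real.rpow_pos_of_pos (hP i j) α) (hw i))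
        Finset.univ_nonempty
    have hfeas : Feasible (epAlloc P α w) := by
      constructor
      · intro i j
        unfold epAlloc
        constructor
        · exact (div_pos (mul_pos (Real.rpow_pos_of_pos (hP i j) α) (hw i)) (hD j)).le
        · rw [div_le_one (hD j)]
          exact Finset.single_le_sum
            (f := fun i' => P i' j ^ α * w i')
            (fun i' _ => (mul_pos (Real.rpow_pos_of_pos (hP i' j) α) (hw i')).le)
            (Finset.mem_univ i)
      · intro j
        unfold epAlloc
        rw [← Finset.sum_div, div_eq_one_iff_eq (hD j).ne']
    refine csInf_le hSbdd ⟨epAlloc P α w, hfeas, ?_⟩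
    have heq : (fun i => loadX P (epAlloc P α w) i) = fun _ : Fin m => L α :=
      funext fun i => hload i
    rw [show (⨆ i, loadX P (epAlloc P α w) i) = ⨆ _ : Fin m, L α by rw [heq]]
    exact (ciSup_const).symm
  have hup : ∀ X, Feasible X → ∀ ε : ℝ, 0 < ε → ∀ α : ℝ, α ≤ -1 →
      L α ≤ ((1+ε) * (1 + m * (1+ε)^α)) * (⨆ i, loadX P X i) := by
    intro X hX ε hε α hα
    obtain ⟨w, hw, hload⟩ := hcanon α
    have hαne : α ≠ 0 := by linarith
    have h1ε : (0:ℝ) < 1 + ε := by linarith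
    set v : Fin m → ℝ := fun i => (w i) ^ (1/α) with hv
    have hvpos : ∀ i, 0 < v i := fun i => Real.rpow_pos_of_pos (hw i) _
    have hvα : ∀ i, v i ^ α = w i := by
      intro i
      rw [hv]
      simp only
      rw [← Real.rpow_mul (hw i).le, one_div, inv_mul_cancel₀ hαne, Real.rpow_one]
    set a : Fin n → Fin m → ℝ := fun j i => P i j * v i with ha
    have hapos : ∀ j i, 0 < a j i := fun j i => mul_pos (hP i j) (hvpos i)
    have haα : ∀ j i, (a j i) ^ α = P i j ^ α * w i := by
      intro i j
      rw [ha]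
      simp only
      rw [Real.mul_rpow (hP _ _).le (hvpos _).le, hvα]
    have hD : ∀ j, (∑ i', P i' j ^ α * w i') = ∑ i, (a j i) ^ α := by
      intro j; exact Finset.sum_congr rfl fun i _ => (haα j i).symm
    have hDpos : ∀ j, 0 < ∑ i, (a j i) ^ α :=
      fun j => Finset.sum_pos (fun i _ => Real.rpow_pos_of_pos (hapos j i) α)
        Finset.univ_nonempty
    have hminex : ∀ j : Fin n, ∃ i0, ∀ i, a j i0 ≤ a j i := by
      intro j
      obtain ⟨i0, -, h⟩ := Finset.exists_min_image Finset.univ (a j) Finset.univ_nonempty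
      exact ⟨i0, fun i => h i (Finset.mem_univ i)⟩
    choose i0 hi0 using hminex
    set C : ℝ := (1+ε) * (1 + m * (1+ε)^α) with hC
    have hp : 0 < (1+ε)^α := Real.rpow_pos_of_pos h1ε α
    have hCpos : 0 < C := by
      have hm0 : (0:ℝ) ≤ m := Nat.cast_nonneg m
      have : (0:ℝ) < 1 + m * (1+ε)^α := by nlinarith
      exact mul_pos h1ε this
    set T : ℝ := ⨆ i, loadX P X i with hT
    have hTle : ∀ i, loadX P X i ≤ T :=
      fun i => le_ciSup (Set.Finite.bddAbove (Set.finite_range _)) i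
    have hitem : ∀ j, ∑ i, epAlloc P α w i j * P i j * v i ≤ C * a j (i0 j) := by
      intro j
      have hrw : ∀ i, epAlloc P α w i j * P i j * v i
          = (a j i) ^ α * a j i / (∑ i', (a j i') ^ α) := by
        intro i
        unfold epAlloc
        rw [hD j, haα j i]
        have : P i j * v i = a j i := rfl
        field_simp
        ring
      calc ∑ i, epAlloc P α w i j * P i j * v i
          = (∑ i, (a j i) ^ α * a j i) / (∑ i', (a j i') ^ α) := by
            rw [Finset.sum_div]; exact Finset.sum_congr rfl fun i _ => hrw i
        _ ≤ (C * (a j (i0 j) * ∑ i', (a j i') ^ α)) / (∑ i', (a j i') ^ α) := by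
            exact div_le_div_of_nonneg_right
              (key_ineq (a j) (hapos j) hα hε (i0 j) (hi0 j)) (hDpos j).le
        _ = C * a j (i0 j) := by
            rw [mul_div_assoc, mul_div_assoc, div_self (hDpos j).ne', mul_one]
    have hvsum : 0 < ∑ i, v i :=
      Finset.sum_pos (fun i _ => hvpos i) Finset.univ_nonempty
    have hmain : L α * (∑ i, v i) ≤ (C * T) * (∑ i, v i) := by
      have h1 : ∑ i, v i * epLoad P α w i = ∑ j, ∑ i, epAlloc P α w i j * P i j * v i := by
        calc ∑ i, v i * epLoad P α w i
            = ∑ i, ∑ j, epAlloc P α w i j * P i j * v i := by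
              refine Finset.sum_congr rfl fun i _ => ?_
              unfold epLoad
              rw [Finset.mul_sum]
              exact Finset.sum_congr rfl fun j _ => by ring
          _ = ∑ j, ∑ i, epAlloc P α w i j * P i j * v i := Finset.sum_comm
      have h2 : ∑ i, v i * epLoad P α w i = L α * (∑ i, v i) := by
        rw [Finset.mul_sum]
        refine Finset.sum_congr rfl fun i _ => ?_
        rw [hload i]; ring
      have h3 : ∑ j, ∑ i, epAlloc P α w i j * P i j * v i ≤ C * ∑ j, a j (i0 j) := by
        rw [Finset.mul_sum]
        exact Finset.sum_le_sum fun j _ => hitem j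
      have h4 : ∑ j, a j (i0 j) ≤ ∑ i, v i * loadX P X i := by
        have h5 : ∀ j, a j (i0 j) ≤ ∑ i, X i j * a j i := by
          intro j
          calc a j (i0 j) = ∑ i, X i j * a j (i0 j) := by
                rw [← Finset.sum_mul, hX.2 j, one_mul]
            _ ≤ ∑ i, X i j * a j i :=
                Finset.sum_le_sum fun i _ =>
                  mul_le_mul_of_nonneg_left (hi0 j i) (hX.1 i j).1
        calc ∑ j, a j (i0 j) ≤ ∑ j, ∑ i, X i j * a j i :=
              Finset.sum_le_sum fun j _ => h5 j
          _ = ∑ i, v i * loadX P X i := by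
              rw [Finset.sum_comm]
              refine Finset.sum_congr rfl fun i _ => ?_
              unfold loadX
              rw [Finset.mul_sum]
              refine Finset.sum_congr rfl fun j _ => ?_
              show X i j * (P i j * v i) = v i * (X i j * P i j)
              ring
      have h6 : ∑ i, v i * loadX P X i ≤ T * (∑ i, v i) := by
        rw [Finset.mul_sum]
        exact Finset.sum_le_sum fun i _ => by
          rw [mul_comm (T)]
          exact mul_le_mul_of_nonneg_left (hTle i) (hvpos i).le
      calc L α * (∑ i, v i) = ∑ j, ∑ i, epAlloc P α w i j * P i j * v i := by
            rw [← h1, h2]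
        _ ≤ C * ∑ j, a j (i0 j) := h3
        _ ≤ C * ∑ i, v i * loadX P X i := by
            exact mul_le_mul_of_nonneg_left h4 hCpos.le
        _ ≤ C * (T * (∑ i, v i)) := mul_le_mul_of_nonneg_left h6 hCpos.le
        _ = (C * T) * (∑ i, v i) := by ring
    exact le_of_mul_le_mul_right hmain hvsum
  rw [tendsto_order]
  constructor
  · intro b hb
    exact Filter.Eventually.of_forall fun α => lt_of_lt_of_le hb (hlow α)
  · intro b hb
    have hb' : sInf S < b := hb
    obtain ⟨t, htS, htb⟩ := exists_lt_of_csInf_lt hSne hb'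
    have ht0 : 0 ≤ t := hSnonneg t htS
    obtain ⟨X, hX, htX⟩ := htS
    set ε : ℝ := (b - t) / (2 * (t + 1)) with hε
    have hεpos : 0 < ε := div_pos (by linarith) (by linarith)
    have h1εt : (1 + ε) * t < b := by
      have : ε * t ≤ (b - t)/2 := by
        rw [hε]
        rw [div_mul_eq_mul_div, div_le_div_iff₀ (by linarith) (by norm_num)]
        nlinarith
      nlinarith
    have h0 : Filter.Tendsto (fun α : ℝ => (1+ε)^α) Filter.atBot (nhds 0) := by
      have hlog : 0 < Real.log (1+ε) := Real.log_pos (by linarith)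
      have h1 : Filter.Tendsto (fun α : ℝ => Real.log (1+ε) * α) Filter.atBot Filter.atBot :=
        Filter.Tendsto.const_mul_atBot hlog Filter.tendsto_id
      have h2 := Real.tendsto_exp_atBot.comp h1
      refine h2.congr fun α => ?_
      rw [Function.comp_apply, Real.rpow_def_of_pos (by linarith : (0:ℝ) < 1+ε)]
    have hlim : Filter.Tendsto (fun α : ℝ => ((1+ε) * (1 + m * (1+ε)^α)) * t)
        Filter.atBot (nhds (((1+ε) * (1 + (m:ℝ) * 0)) * t)) := by
      exact (((h0.const_mul (m:ℝ)).const_add 1).const_mul (1+ε)).mul_const t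
    have hlt : ((1+ε) * (1 + (m:ℝ) * 0)) * t < b := by
      rw [mul_zero, add_zero, mul_one]; exact h1εt
    have hev := hlim.eventually_lt_const hlt
    filter_upwards [hev, Filter.eventually_le_atBot (-1 : ℝ)] with α h1 h2
    calc L α ≤ ((1+ε) * (1 + m * (1+ε)^α)) * (⨆ i, loadX P X i) := hup X hX ε hεpos α h2
      _ = ((1+ε) * (1 + m * (1+ε)^α)) * t := by rw [← htX]
      _ < b := h1
end
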